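/- Fix d ≥ 2, p ∈ (0,1) and λ ∈ (0,1). Let E = {f_1, f_{-1}, f_2, f_{-2}} be the four edges of Z^d joining the origin to ±e_1 and ±e_2, and for a local configuration z ∈ {0,1}^E let μ(z) denote the ℙ_{p,λ,d}-probability that the restriction of the edge configuration to E equals z. Let x be the configuration with exactly f_1 and f_{-1} open, and y the configuration with exactly f_1 and f_2 open. Then μ(x ∨ y)·μ(x ∧ y) − μ(x)·μ(y) = [p λ³(1−λ)]·[p λ (1−λ)³] − [p λ²(1−λ)² + (1−p) λ (1−λ)]·[p λ²(1−λ)²] < 0; in particular the marginal edge law fails the lattice condition μ(x∨y)μ(x∧y) ≥ μ(x)μ(y). -/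

import Mathlib

open MeasureTheory ENNReal

namespace AlignmentPercolation

/-- Sites of the lattice `ℤ^d`. -/
abbrev Site (d : ℕ) := Fin d → ℤ

/-- A site configuration: `true` means occupied. -/
abbrev SiteCfg (d : ℕ) := Site d → Bool

/-- Labels (open/closed) attached to (potential) segments, indexed by their ordered
pair of endpoints. -/
abbrev PairLabels (d : ℕ) := Site d × Site d → Bool

/-- A configuration of the independent alignment percolation model: a site
configuration together with independent labels for the segments. -/
abbrev Cfg (d : ℕ) := SiteCfg d × PairLabels d

/-- Nearest-neighbour edges of `ℤ^d`, indexed by their lower endpoint and direction: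
`(u, i)` is the edge from `u` to `u + e_i`. -/
abbrev EdgeIdx (d : ℕ) := Site d × Fin d

/-- The point obtained from `u` by replacing its `i`-th coordinate with `a`. -/
def seg {d : ℕ} (u : Site d) (i : Fin d) (a : ℤ) : Site d := Function.update u i a

/-- The point `u + e_i`. -/
def up {d : ℕ} (u : Site d) (i : Fin d) : Site d := seg u i (u i + 1)

/-- The skewed doubling map underlying the construction of an i.i.d.
Bernoulli(p) sequence from a single uniform random variable on `[0,1)`. -/
noncomputable def bernShift (p : ℝ) (x : ℝ) : ℝ :=
  if x < p then x / p else (x - p) / (1 - p)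

open scoped Classical in
noncomputable def bernDigit (p : ℝ) (x : ℝ) : Bool := if x < p then true else false

/-- The sequence of skewed binary digits of `x`; under the uniform distribution on
`[0,1)` this is an i.i.d. Bernoulli(p) sequence. -/
noncomputable def bernDigits (p : ℝ) (x : ℝ) : ℕ → Bool :=
  fun n => bernDigit p ((bernShift p)^[n] x)

/-- The i.i.d. Bernoulli(p) product probability measure on `ι → Bool`, for a countable
index type `ι`: the law of the family of skewed binary digits (indexed through an
injection `ι ↪ ℕ`) of a uniform random variable on `[0,1)`. Each coordinate is `true`
with probability `p` (with the convention that `p` is clamped to `[0,1]`). -/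
noncomputable def iidBool (ι : Type*) [Countable ι] (p : ℝ) : Measure (ι → Bool) :=
  Measure.map (fun f (i : ι) => f ((Countable.exists_injective_nat ι).choose i))
    (Measure.map (bernDigits p) (volume.restrict (Set.Ico (0 : ℝ) 1)))

/-- The law `ℙ_{p,λ,d}` of the independent alignment percolation model: sites are
occupied independently with probability `p`, and independently every potential
segment carries an independent Bernoulli(λ) label. -/
noncomputable def alignMeasure (d : ℕ) (p lam : ℝ) : Measure (Cfg d) :=
  (iidBool (Site d) p).prod (iidBool (Site d × Site d) lam)

/-- `(v, w)` is a feasible pair of the site configuration `ω` (ordered so that the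
coordinate where they differ increases): `v` and `w` differ in exactly one
coordinate, are both occupied, and no site strictly between them is occupied. -/
def FeasiblePair {d : ℕ} (ω : SiteCfg d) (v w : Site d) : Prop :=
  ∃ i : Fin d, (∀ j, j ≠ i → v j = w j) ∧ v i < w i ∧
    ω v = true ∧ ω w = true ∧ ∀ c : ℤ, v i < c → c < w i → ω (seg v i c) = false

/-- The edge `e` lies on the axis-parallel segment with endpoints `v` and `w`. -/
def EdgeOnSeg {d : ℕ} (e : EdgeIdx d) (v w : Site d) : Prop :=
  ∃ a b : ℤ, a ≤ e.1 e.2 ∧ e.1 e.2 < b ∧ v = seg e.1 e.2 a ∧ w = seg e.1 e.2 b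

/-- The edge `e` is open in the configuration `ξ`: it lies on the segment of a
feasible pair whose label is open. -/
def EdgeOpen {d : ℕ} (ξ : Cfg d) (e : EdgeIdx d) : Prop :=
  ∃ v w : Site d, FeasiblePair ξ.1 v w ∧ EdgeOnSeg e v w ∧ ξ.2 (v, w) = true

/-- The induced edge configuration `σ ∈ {0,1}^{E^d}` (as a `Bool`). -/
noncomputable def edgeState {d : ℕ} (ξ : Cfg d) (e : EdgeIdx d) : Bool :=
  @decide (EdgeOpen ξ e) (Classical.propDecidable _)

/-- The graph on `ℤ^d` whose edges are the open edges of the configuration `ξ`. -/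
def openGraph {d : ℕ} (ξ : Cfg d) : SimpleGraph (Site d) where
  Adj u v := ∃ i, (v = up u i ∧ EdgeOpen ξ (u, i)) ∨ (u = up v i ∧ EdgeOpen ξ (v, i))
  symm := by constructor; rintro u v ⟨i, h | h⟩; exacts [⟨i, Or.inr h⟩, ⟨i, Or.inl h⟩]
  loopless := by
    constructor
    rintro u ⟨i, ⟨h, -⟩ | ⟨h, -⟩⟩ <;>
    · have := congrFun h i
      simp [up, seg] at this

/-- The site `v` lies in an infinite connected component of open edges. -/
def PercolatesFrom {d : ℕ} (ξ : Cfg d) (v : Site d) : Prop :=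
  {w | (openGraph ξ).Reachable v w}.Infinite

/-- The set `𝒪` of open edges percolates. -/
def Percolates {d : ℕ} (ξ : Cfg d) : Prop := ∃ v, PercolatesFrom ξ v

/-- `θ(p,λ,d)`: the probability that the origin lies in an infinite open cluster. -/
noncomputable def theta (d : ℕ) (p lam : ℝ) : ℝ≥0∞ :=
  alignMeasure d p lam {ξ | PercolatesFrom ξ 0}

/-- `ℙ_{p,λ,d}(𝒪 percolates)`. -/
noncomputable def percProb (d : ℕ) (p lam : ℝ) : ℝ≥0∞ :=
  alignMeasure d p lam {ξ | Percolates ξ}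

/-- The critical segment parameter `λ_c(p,d) = sup {λ ≥ 0 : θ(p,λ,d) = 0}`. -/
noncomputable def lambdaC (d : ℕ) (p : ℝ) : ℝ :=
  sSup {lam : ℝ | 0 ≤ lam ∧ theta d p lam = 0}

/-- A configuration of Bernoulli bond percolation on `ℤ^d`. -/
abbrev BondCfg (d : ℕ) := EdgeIdx d → Bool

/-- Independent Bernoulli(λ) bond percolation on `ℤ^d`. -/
noncomputable def bondMeasure (d : ℕ) (lam : ℝ) : Measure (BondCfg d) :=
  iidBool (EdgeIdx d) lam

/-- The graph of open bonds of a bond configuration. -/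
def bondGraph {d : ℕ} (σ : BondCfg d) : SimpleGraph (Site d) where
  Adj u v := ∃ i, (v = up u i ∧ σ (u, i) = true) ∨ (u = up v i ∧ σ (v, i) = true)
  symm := by constructor; rintro u v ⟨i, h | h⟩; exacts [⟨i, Or.inr h⟩, ⟨i, Or.inl h⟩]
  loopless := by
    constructor
    rintro u ⟨i, ⟨h, -⟩ | ⟨h, -⟩⟩ <;>
    · have := congrFun h i
      simp [up, seg] at this

/-- The percolation function of Bernoulli bond percolation on `ℤ^d`. -/
noncomputable def thetaBond (d : ℕ) (lam : ℝ) : ℝ≥0∞ :=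
  bondMeasure d lam {σ | {w | (bondGraph σ).Reachable 0 w}.Infinite}

/-- The critical parameter `p_c^bond(d)` of Bernoulli bond percolation on `ℤ^d`. -/
noncomputable def pcBond (d : ℕ) : ℝ :=
  sSup {lam : ℝ | 0 ≤ lam ∧ thetaBond d lam = 0}

/-- The (closed) sup-norm box `B(x,L)` in `ℤ^d`. -/
def box (d : ℕ) (x : Site d) (L : ℝ) : Set (Site d) :=
  {z | ∀ i, |((z i - x i : ℤ) : ℝ)| ≤ L}

/-- The sphere `∂B(x,L) = {z : ‖z - x‖_∞ = ⌊L⌋}` in `ℤ^d`. -/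
def sphere (d : ℕ) (x : Site d) (L : ℝ) : Set (Site d) :=
  {z | (∀ i, |z i - x i| ≤ ⌊L⌋) ∧ ∃ i, |z i - x i| = ⌊L⌋}

/-- The sup-norm distance `‖x - y‖_∞` on `ℤ^d` (as a natural number). -/
def supDist {d : ℕ} (x y : Site d) : ℕ :=
  Finset.univ.sup fun i => (x i - y i).natAbs

/-- The sequence of scales: `L 0 = 10^4` and `L (k+1) = (L k)^(3/2)`. -/
noncomputable def Lscale : ℕ → ℝ
  | 0 => 10 ^ 4
  | k + 1 => Lscale k ^ ((3 : ℝ) / 2)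

/-- `α(p) = -log (1-p)`. -/
noncomputable def alphaP (p : ℝ) : ℝ := - Real.log (1 - p)

/-- The edge `e` has both endpoints in `B`. -/
def EdgeIn {d : ℕ} (B : Set (Site d)) (e : EdgeIdx d) : Prop :=
  e.1 ∈ B ∧ up e.1 e.2 ∈ B

/-- The event `A` is supported on the edges of `B`: it is measurable with respect to
the σ-algebra generated by the states of the edges with both endpoints in `B`. -/
def SupportedOnEdges {d : ℕ} (B : Set (Site d)) (A : Set (Cfg d)) : Prop :=
  MeasurableSet[MeasurableSpace.comap
    (fun ξ (e : {e : EdgeIdx d // EdgeIn B e}) => edgeState ξ e.1) inferInstance] A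

/-- `S` is a set of points of `T` whose `L`-boxes cover `T`. -/
def IsCover (d : ℕ) (T : Set (Site d)) (L : ℝ) (S : Finset (Site d)) : Prop :=
  ↑S ⊆ T ∧ T ⊆ ⋃ x ∈ S, box d x L

/-- `S` is a cover of `T` by `L`-boxes centred in `T`, of minimal cardinality. -/
def IsMinCover (d : ℕ) (T : Set (Site d)) (L : ℝ) (S : Finset (Site d)) : Prop :=
  IsCover d T L S ∧ ∀ S' : Finset (Site d), IsCover d T L S' → S.card ≤ S'.card

/-!
Almost surely every half-axis through the origin carries an occupied site. Given the sites, the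
four edges `f_{±1}, f_{±2}` are open exactly when the labels of the feasible pairs containing them
are. If the origin is occupied these are four distinct pairs (the origin and its nearest occupied
neighbour on each half-axis), so the edge states are four independent Bernoulli(λ) variables. If
the origin is vacant, `f₁` and `f₋₁` lie on one and the same segment, and so do `f₂` and `f₋₂`.
Hence, with `w(1) = λ` and `w(0) = 1 - λ`,
`μ(z) = p w(z₁) w(z₋₁) w(z₂) w(z₋₂) + (1 - p) [z₁ = z₋₁] w(z₁) [z₂ = z₋₂] w(z₂)`,
and the difference in the statement is `-p(1-p)λ³(1-λ)³`.

The measures of the model are built from skewed binary digits of a uniform point of `[0,1)`. They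
are identified with products of Bernoulli measures because the first digit is Bernoulli(p) and,
given it, the shifted point is again uniform on `[0,1)`.
-/

open ProbabilityTheory unitInterval Function Set

section InfiniteProduct

variable {ι X : Type*} [MeasurableSpace X] (μ : Measure X) [IsProbabilityMeasure μ]

theorem infinitePi_map_comp_of_injective {α : Type*} {e : α → ι} (he : Injective e) :
    (Measure.infinitePi fun _ : ι => μ).map (fun f a => f (e a)) =
      Measure.infinitePi fun _ : α => μ := by
  refine Measure.eq_infinitePi _ fun s t ht => ?_
  classical
  have hpre : (fun (f : ι → X) a => f (e a)) ⁻¹' (s : Set α).pi t =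
      ((s.image e : Finset ι) : Set ι).pi (extend e t fun _ => univ) := by
    ext f
    simp [he.extend_apply]
  have hext (i : ι) : MeasurableSet (extend e t (fun _ => univ) i) := by
    by_cases hi : ∃ a, e a = i
    · obtain ⟨a, rfl⟩ := hi
      simpa [he.extend_apply] using ht a
    · simp [extend_apply' _ _ _ hi]
  rw [Measure.map_apply (by fun_prop) (MeasurableSet.pi (to_countable _) fun i _ => ht i),
    hpre, Measure.infinitePi_pi _ fun i _ => hext i, Finset.prod_image he.injOn]
  simp [he.extend_apply]

theorem infinitePi_setOf_forall_apply_mem {n : ℕ} {q : Fin n → ι} (hq : Injective q)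
    {t : Fin n → Set X} (ht : ∀ k, MeasurableSet (t k)) :
    Measure.infinitePi (fun _ : ι => μ) {f | ∀ k, f (q k) ∈ t k} = ∏ k, μ (t k) := by
  have hpre : {f : ι → X | ∀ k, f (q k) ∈ t k} = (fun f k => f (q k)) ⁻¹' univ.pi t := by
    ext f
    simp
  rw [hpre, ← Measure.map_apply (by fun_prop) (MeasurableSet.univ_pi ht),
    infinitePi_map_comp_of_injective _ hq, ← Finset.coe_univ,
    Measure.infinitePi_pi _ fun k _ => ht k]

end InfiniteProduct

section Coins

variable {p : I}

lemma ae_exists_eq_true (hp : 0 < (p : ℝ)) :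
    ∀ᵐ f ∂(Measure.infinitePi fun _ : ℕ => Ber(true, false, p)), ∃ k, f k = true := by
  have hlt : Ber(true, false, p) {false} < 1 := by
    simp [← ENNReal.ofReal_coe_nnreal, hp]
  rw [ae_iff]
  refine le_zero_iff.mp (ge_of_tendsto' (ENNReal.tendsto_pow_atTop_nhds_zero_of_lt_one hlt)
    fun n => ?_)
  calc _ ≤ Measure.infinitePi (fun _ : ℕ => Ber(true, false, p))
        ((Finset.range n : Set ℕ).pi fun _ => {false}) :=
        measure_mono fun f hf k _ => by simpa using not_exists.mp hf k
    _ = _ := by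
        rw [Measure.infinitePi_pi _ fun _ _ => .of_discrete]
        simp

lemma ae_exists_apply_eq_true {ι : Type*} (hp : 0 < (p : ℝ)) {x : ℕ → ι} (hx : Injective x) :
    ∀ᵐ f ∂(Measure.infinitePi fun _ : ι => Ber(true, false, p)), ∃ k, f (x k) = true := by
  refine ae_of_ae_map (p := fun g : ℕ → Bool => ∃ k, g k = true)
    (by fun_prop : Measurable fun (f : ι → Bool) k => f (x k)).aemeasurable ?_
  rw [infinitePi_map_comp_of_injective _ hx]
  exact ae_exists_eq_true hp

end Coins

section BernoulliDigits

lemma measurable_bernShift (p : ℝ) : Measurable (bernShift p) :=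
  Measurable.ite (measurableSet_lt measurable_id measurable_const)
    (measurable_id.div_const p) ((measurable_id.sub_const p).div_const (1 - p))

lemma measurable_bernDigit (p : ℝ) : Measurable (bernDigit p) :=
  Measurable.ite (measurableSet_lt measurable_id measurable_const)
    measurable_const measurable_const

lemma measurable_bernDigits (p : ℝ) : Measurable (bernDigits p) :=
  measurable_pi_lambda _ fun n =>
    (measurable_bernDigit p).comp ((measurable_bernShift p).iterate n)

lemma bernDigits_succ (p x : ℝ) (k : ℕ) :
    bernDigits p x (k + 1) = bernDigits p (bernShift p x) k := by
  simp only [bernDigits, iterate_succ_apply]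

lemma volume_Ico_inter_preimage_affine {a c : ℝ} (hc : 0 < c) (A : Set ℝ) :
    volume (Ico a (a + c) ∩ (fun x => (x - a) / c) ⁻¹' A) =
      ENNReal.ofReal c * volume (Ico 0 1 ∩ A) := by
  have hpre : Ico a (a + c) ∩ (fun x => (x - a) / c) ⁻¹' A =
      (fun x => c⁻¹ * x) ∘ (fun x => -a + x) ⁻¹' (Ico 0 1 ∩ A) := by
    ext x
    simp only [mem_inter_iff, mem_Ico, mem_preimage, comp_apply, ← sub_eq_neg_add,
      ← div_eq_inv_mul, div_nonneg_iff, div_lt_one hc, sub_nonneg]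
    grind
  rw [hpre, preimage_comp, measure_preimage_add,
    Real.volume_preimage_mul_left (inv_ne_zero hc.ne'), inv_inv, abs_of_pos hc]

variable {p : I}

lemma volume_Ico_inter_bernDigit_eq (hp : 0 < (p : ℝ)) (hp1 : (p : ℝ) < 1) (t : Bool)
    (A : Set ℝ) :
    volume (Ico 0 1 ∩ {x | bernDigit p x = t ∧ bernShift p x ∈ A}) =
      Ber(true, false, p) {t} * volume (Ico 0 1 ∩ A) := by
  cases t
  · have hset : Ico 0 1 ∩ {x | bernDigit p x = false ∧ bernShift p x ∈ A} =
        Ico (p : ℝ) (p + (1 - p)) ∩ (fun x => (x - p) / (1 - p)) ⁻¹' A := by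
      ext x
      grind [bernDigit, bernShift]
    rw [hset, volume_Ico_inter_preimage_affine (by linarith)]
    simp [← ENNReal.ofReal_coe_nnreal]
  · have hset : Ico 0 1 ∩ {x | bernDigit p x = true ∧ bernShift p x ∈ A} =
        Ico 0 (0 + (p : ℝ)) ∩ (fun x => (x - 0) / p) ⁻¹' A := by
      ext x
      grind [bernDigit, bernShift]
    rw [hset, volume_Ico_inter_preimage_affine hp]
    simp [← ENNReal.ofReal_coe_nnreal]

lemma volume_Ico_inter_bernDigit_mem (hp : 0 < (p : ℝ)) (hp1 : (p : ℝ) < 1) (s : Set Bool)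
    {A : Set ℝ} (hA : MeasurableSet A) :
    volume (Ico 0 1 ∩ {x | bernDigit p x ∈ s ∧ bernShift p x ∈ A}) =
      Ber(true, false, p) s * volume (Ico 0 1 ∩ A) := by
  classical
  have hunion : Ico 0 1 ∩ {x | bernDigit p x ∈ s ∧ bernShift p x ∈ A} =
      ⋃ t ∈ s.toFinset, Ico 0 1 ∩ {x | bernDigit p x = t ∧ bernShift p x ∈ A} := by
    ext x
    simp
  have hmeas (t : Bool) :
      MeasurableSet (Ico 0 1 ∩ {x | bernDigit p x = t ∧ bernShift p x ∈ A}) :=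
    measurableSet_Ico.inter ((measurable_bernDigit p (measurableSet_singleton t)).inter
      (measurable_bernShift p hA))
  rw [hunion, measure_biUnion_finset _ fun t _ => hmeas t]
  · conv_rhs => rw [← s.coe_toFinset, ← sum_measure_singleton, Finset.sum_mul]
    exact Finset.sum_congr rfl fun t _ => volume_Ico_inter_bernDigit_eq hp hp1 t A
  · intro t _ t' _ htt'
    exact Disjoint.mono inter_subset_right inter_subset_right
      (disjoint_left.mpr fun x hx hx' => htt' (hx.1.symm.trans hx'.1))

lemma volume_Ico_inter_bernDigits_preimage_pi_range (hp : 0 < (p : ℝ)) (hp1 : (p : ℝ) < 1)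
    (n : ℕ) (t : ℕ → Set Bool) :
    volume (Ico 0 1 ∩ bernDigits p ⁻¹' (Finset.range n : Set ℕ).pi t) =
      ∏ k ∈ Finset.range n, Ber(true, false, p) (t k) := by
  induction n generalizing t with
  | zero => simp [Real.volume_Ico]
  | succ n ih =>
    have hset : bernDigits p ⁻¹' (Finset.range (n + 1) : Set ℕ).pi t =
        {x | bernDigit p x ∈ t 0 ∧
          bernShift p x ∈ bernDigits p ⁻¹' (Finset.range n : Set ℕ).pi fun k => t (k + 1)} := by
      ext x
      simp only [mem_preimage, mem_pi, Finset.coe_range, mem_Iio, mem_ofPred_eq,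
        Nat.forall_lt_succ_left', bernDigits_succ]
      rfl
    rw [hset, volume_Ico_inter_bernDigit_mem hp hp1 _
      (measurable_bernDigits p (MeasurableSet.pi (to_countable _) fun _ _ => .of_discrete)),
      ih, Finset.prod_range_succ', mul_comm]

theorem map_bernDigits_eq_infinitePi (hp : 0 < (p : ℝ)) (hp1 : (p : ℝ) < 1) :
    (volume.restrict (Ico (0 : ℝ) 1)).map (bernDigits p) =
      Measure.infinitePi fun _ : ℕ => Ber(true, false, p) := by
  refine Measure.eq_infinitePi _ fun s t _ => ?_
  classical
  obtain ⟨n, hsn⟩ := s.exists_nat_subset_range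
  have hpi : (s : Set ℕ).pi t =
      (Finset.range n : Set ℕ).pi fun k => if k ∈ s then t k else univ := by
    ext f
    simp only [mem_pi, Finset.mem_coe, Finset.coe_range, mem_Iio]
    exact ⟨fun h k _ => by split_ifs with hk; exacts [h k hk, mem_univ _],
      fun h k hk => by simpa [hk] using h k (Finset.mem_range.mp (hsn hk))⟩
  rw [Measure.map_apply (measurable_bernDigits p)
      (MeasurableSet.pi (to_countable _) fun _ _ => .of_discrete),
    Measure.restrict_apply' measurableSet_Ico, inter_comm, hpi,
    volume_Ico_inter_bernDigits_preimage_pi_range hp hp1]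
  simp [apply_ite, Finset.prod_ite_mem, Finset.inter_eq_right.mpr hsn]

theorem iidBool_eq_infinitePi (ι : Type*) [Countable ι] (hp : 0 < (p : ℝ)) (hp1 : (p : ℝ) < 1) :
    iidBool ι p = Measure.infinitePi fun _ : ι => Ber(true, false, p) := by
  rw [iidBool, map_bernDigits_eq_infinitePi hp hp1,
    infinitePi_map_comp_of_injective _ (Countable.exists_injective_nat ι).choose_spec]

end BernoulliDigits

section Segments

variable {d : ℕ}

@[simp] lemma seg_apply_self (u : Site d) (i : Fin d) (a : ℤ) : seg u i a i = a := by
  simp [seg]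

lemma seg_apply_of_ne {i j : Fin d} (h : j ≠ i) (u : Site d) (a : ℤ) : seg u i a j = u j := by
  simp [seg, h]

@[simp] lemma seg_seg (u : Site d) (i : Fin d) (a c : ℤ) : seg (seg u i a) i c = seg u i c := by
  simp [seg]

@[simp] lemma seg_zero_zero (i : Fin d) : seg (0 : Site d) i 0 = 0 := by
  simp [seg]

lemma seg_injective (u : Site d) (i : Fin d) : Injective (seg u i) :=
  fun a b h => by simpa using congrFun h i

lemma seg_zero_ne_zero {i : Fin d} {a : ℤ} (ha : a ≠ 0) : seg (0 : Site d) i a ≠ 0 := by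
  simpa using (seg_injective 0 i).ne ha

lemma seg_zero_ne_seg_zero {i j : Fin d} (hij : i ≠ j) {a : ℤ} (ha : a ≠ 0) (b : ℤ) :
    seg (0 : Site d) i a ≠ seg 0 j b :=
  fun h => ha (by simpa [seg_apply_of_ne hij] using congrFun h i)

lemma edgeOpen_iff_of_gap {ω : SiteCfg d} {ζ : PairLabels d} {u : Site d} {i : Fin d}
    {a b m : ℤ} (ha : ω (seg u i a) = true) (hb : ω (seg u i b) = true) (ham : a ≤ m)
    (hmb : m < b) (hgap : ∀ c, a < c → c < b → ω (seg u i c) = false) :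
    EdgeOpen (ω, ζ) (seg u i m, i) ↔ ζ (seg u i a, seg u i b) = true := by
  constructor
  · rintro ⟨v, w, ⟨j, hvw, hlt, hv, hw, hgap'⟩, ⟨a', b', ha'm, hmb', rfl, rfl⟩, hζ⟩
    simp only [seg_apply_self, seg_seg] at ha'm hmb' hv hw hζ hgap' hlt
    have hji : j = i := by
      by_contra hne
      rw [seg_apply_of_ne hne, seg_apply_of_ne hne] at hlt
      exact lt_irrefl _ hlt
    subst hji
    simp only [seg_apply_self, seg_seg] at hlt hgap'
    have haa : a' = a := by
      by_contra hne
      rcases lt_or_gt_of_ne hne with h | h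
      · simp [hgap' a h (by omega)] at ha
      · simp [hgap a' h (by omega)] at hv
    have hbb : b' = b := by
      by_contra hne
      rcases lt_or_gt_of_ne hne with h | h
      · simp [hgap b' (by omega) h] at hw
      · simp [hgap' b (by omega) h] at hb
    rwa [haa, hbb] at hζ
  · intro hζ
    refine ⟨seg u i a, seg u i b, ⟨i, fun j hj => ?_, ?_, ha, hb, ?_⟩, ⟨a, b, ?_⟩, hζ⟩
    · rw [seg_apply_of_ne hj, seg_apply_of_ne hj]
    · simpa using ham.trans_lt hmb
    · simpa using hgap
    · simpa using ⟨ham, hmb⟩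

lemma exists_next_occupied {ω : SiteCfg d} {u : Site d} {i : Fin d} {m : ℤ}
    (h : ∃ k > m, ω (seg u i k) = true) :
    ∃ b > m, ω (seg u i b) = true ∧ ∀ c, m < c → c < b → ω (seg u i c) = false := by
  obtain ⟨b, ⟨hmb, hb⟩, hmin⟩ :=
    Int.exists_least_of_bdd ⟨m, fun z (hz : z > m ∧ _) => hz.1.le⟩ h
  exact ⟨b, hmb, hb, fun c hmc hcb => by
    simpa using fun hc => (hmin c ⟨hmc, hc⟩).not_gt hcb⟩

lemma exists_prev_occupied {ω : SiteCfg d} {u : Site d} {i : Fin d} {m : ℤ}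
    (h : ∃ k < m, ω (seg u i k) = true) :
    ∃ a < m, ω (seg u i a) = true ∧ ∀ c, a < c → c < m → ω (seg u i c) = false := by
  obtain ⟨a, ⟨ham, ha⟩, hmax⟩ :=
    Int.exists_greatest_of_bdd ⟨m, fun z (hz : z < m ∧ _) => hz.1.le⟩ h
  exact ⟨a, ham, ha, fun c hac hcm => by
    simpa using fun hc => (hmax c ⟨hcm, hc⟩).not_gt hac⟩

end Segments

section CrossEvent

variable {d : ℕ}

lemma measurableSet_edgeOpen (e : EdgeIdx d) : MeasurableSet {ξ : Cfg d | EdgeOpen ξ e} := by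
  simp only [EdgeOpen, FeasiblePair]
  measurability

lemma measurable_edgeState (e : EdgeIdx d) : Measurable fun ξ : Cfg d => edgeState ξ e := by
  refine measurable_to_countable' fun x => ?_
  cases x
  · convert (measurableSet_edgeOpen e).compl using 1
    ext ξ
    simp [edgeState]
  · convert measurableSet_edgeOpen e using 1
    ext ξ
    simp [edgeState]

lemma edgeState_eq_of_iff {ξ : Cfg d} {e : EdgeIdx d} {x : Bool}
    (h : EdgeOpen ξ e ↔ x = true) : edgeState ξ e = x := by
  cases x <;> simpa [edgeState] using h

def HalfAxesOccupied (ω : SiteCfg d) (i : Fin d) : Prop :=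
  (∃ k > 0, ω (seg 0 i k) = true) ∧ ∃ k < 0, ω (seg 0 i k) = true

lemma ae_halfAxesOccupied {p : I} (hp : 0 < (p : ℝ)) :
    ∀ᵐ ω ∂(Measure.infinitePi fun _ : Site d => Ber(true, false, p)),
      ∀ i, HalfAxesOccupied ω i := by
  refine ae_all_iff.mpr fun i => ?_
  have hpos := ae_exists_apply_eq_true hp (x := fun k : ℕ => seg (0 : Site d) i (k + 1))
    fun k l h => by simpa using seg_injective 0 i h
  have hneg := ae_exists_apply_eq_true hp (x := fun k : ℕ => seg (0 : Site d) i (-(k + 1)))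
    fun k l h => by simpa using seg_injective 0 i h
  filter_upwards [hpos, hneg] with ω ⟨k, hk⟩ ⟨l, hl⟩
  exact ⟨⟨k + 1, by positivity, hk⟩, ⟨-(l + 1), by omega, hl⟩⟩

lemma edgeState_axis_of_occupied {ω : SiteCfg d} {i : Fin d} (h0 : ω 0 = true)
    (hω : HalfAxesOccupied ω i) :
    ∃ a < 0, ∃ b > 0, ∀ ζ : PairLabels d,
      edgeState (ω, ζ) (0, i) = ζ (0, seg 0 i b) ∧
        edgeState (ω, ζ) (seg 0 i (-1), i) = ζ (seg 0 i a, 0) := by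
  obtain ⟨b, hb0, hb, hgapb⟩ := exists_next_occupied hω.1
  obtain ⟨a, ha0, ha, hgapa⟩ := exists_prev_occupied hω.2
  have h0' : ω (seg 0 i 0) = true := by simpa using h0
  refine ⟨a, ha0, b, hb0, fun ζ => ⟨?_, ?_⟩⟩
  · simpa using edgeState_eq_of_iff (edgeOpen_iff_of_gap (ζ := ζ) h0' hb le_rfl hb0 hgapb)
  · simpa using edgeState_eq_of_iff
      (edgeOpen_iff_of_gap (ζ := ζ) (m := -1) ha h0' (by omega) (by omega) hgapa)

lemma edgeState_axis_of_vacant {ω : SiteCfg d} {i : Fin d} (h0 : ω 0 = false)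
    (hω : HalfAxesOccupied ω i) :
    ∃ a < 0, ∃ b > 0, ∀ ζ : PairLabels d,
      edgeState (ω, ζ) (0, i) = ζ (seg 0 i a, seg 0 i b) ∧
        edgeState (ω, ζ) (seg 0 i (-1), i) = ζ (seg 0 i a, seg 0 i b) := by
  obtain ⟨b, hb0, hb, hgapb⟩ := exists_next_occupied hω.1
  obtain ⟨a, ha0, ha, hgapa⟩ := exists_prev_occupied hω.2
  have hgap (c : ℤ) (hac : a < c) (hcb : c < b) : ω (seg 0 i c) = false := by
    rcases lt_trichotomy c 0 with hc | rfl | hc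
    · exact hgapa c hac hc
    · simpa using h0
    · exact hgapb c hc hcb
  refine ⟨a, ha0, b, hb0, fun ζ => ⟨?_, ?_⟩⟩
  · simpa using edgeState_eq_of_iff
      (edgeOpen_iff_of_gap (ζ := ζ) (m := 0) ha hb ha0.le hb0 hgap)
  · exact edgeState_eq_of_iff
      (edgeOpen_iff_of_gap (ζ := ζ) (m := -1) ha hb (by omega) (by omega) hgap)

/-- `{σ|_E = (x₁, x₁', x₂, x₂')}` for `E = {f_i, f_{-i}, f_j, f_{-j}}`. -/
def crossEvent (i j : Fin d) (x₁ x₁' x₂ x₂' : Bool) : Set (Cfg d) :=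
  {ξ | edgeState ξ (0, i) = x₁ ∧ edgeState ξ (seg 0 i (-1), i) = x₁' ∧
    edgeState ξ (0, j) = x₂ ∧ edgeState ξ (seg 0 j (-1), j) = x₂'}

lemma measurableSet_crossEvent (i j : Fin d) (x₁ x₁' x₂ x₂' : Bool) :
    MeasurableSet (crossEvent i j x₁ x₁' x₂ x₂') := by
  have h (e : EdgeIdx d) (x : Bool) : MeasurableSet {ξ : Cfg d | edgeState ξ e = x} :=
    measurable_edgeState e (measurableSet_singleton x)
  simp only [crossEvent, ofPred_and]
  exact (h _ _).inter ((h _ _).inter ((h _ _).inter (h _ _)))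

variable {lam : I} {i j : Fin d} {ω : SiteCfg d}

lemma measure_crossEvent_section_of_occupied (hij : i ≠ j) (h0 : ω 0 = true)
    (hi : HalfAxesOccupied ω i) (hj : HalfAxesOccupied ω j) (x₁ x₁' x₂ x₂' : Bool) :
    Measure.infinitePi (fun _ : Site d × Site d => Ber(true, false, lam))
        (Prod.mk ω ⁻¹' crossEvent i j x₁ x₁' x₂ x₂') =
      Ber(true, false, lam) {x₁} * Ber(true, false, lam) {x₁'} *
        Ber(true, false, lam) {x₂} * Ber(true, false, lam) {x₂'} := by
  obtain ⟨a₁, ha₁, b₁, hb₁, h₁⟩ := edgeState_axis_of_occupied h0 hi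
  obtain ⟨a₂, ha₂, b₂, hb₂, h₂⟩ := edgeState_axis_of_occupied h0 hj
  set q : Fin 4 → Site d × Site d :=
    ![(0, seg 0 i b₁), (seg 0 i a₁, 0), (0, seg 0 j b₂), (seg 0 j a₂, 0)]
  have hq : Injective q := by
    have := seg_zero_ne_zero (d := d) (i := i) ha₁.ne
    have := seg_zero_ne_zero (d := d) (i := i) hb₁.ne'
    have := seg_zero_ne_zero (d := d) (i := j) ha₂.ne
    have := seg_zero_ne_zero (d := d) (i := j) hb₂.ne'
    have := seg_zero_ne_seg_zero hij ha₁.ne a₂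
    have := seg_zero_ne_seg_zero hij hb₁.ne' b₂
    intro k l
    fin_cases k <;> fin_cases l <;> simp [q, *, Ne.symm]
  have hsec : Prod.mk ω ⁻¹' crossEvent i j x₁ x₁' x₂ x₂' =
      {ζ | ∀ k, ζ (q k) ∈ (![{x₁}, {x₁'}, {x₂}, {x₂'}] : Fin 4 → Set Bool) k} := by
    ext ζ
    simp [crossEvent, Fin.forall_fin_succ, q, (h₁ ζ).1, (h₁ ζ).2, (h₂ ζ).1, (h₂ ζ).2]
  rw [hsec, infinitePi_setOf_forall_apply_mem _ hq fun _ => .of_discrete, Fin.prod_univ_four]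
  rfl

lemma measure_crossEvent_section_of_vacant (hij : i ≠ j) (h0 : ω 0 = false)
    (hi : HalfAxesOccupied ω i) (hj : HalfAxesOccupied ω j) (x₁ x₁' x₂ x₂' : Bool) :
    Measure.infinitePi (fun _ : Site d × Site d => Ber(true, false, lam))
        (Prod.mk ω ⁻¹' crossEvent i j x₁ x₁' x₂ x₂') =
      Ber(true, false, lam) ({x₁} ∩ {x₁'}) * Ber(true, false, lam) ({x₂} ∩ {x₂'}) := by
  obtain ⟨a₁, ha₁, b₁, hb₁, h₁⟩ := edgeState_axis_of_vacant h0 hi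
  obtain ⟨a₂, ha₂, b₂, hb₂, h₂⟩ := edgeState_axis_of_vacant h0 hj
  set q : Fin 2 → Site d × Site d := ![(seg 0 i a₁, seg 0 i b₁), (seg 0 j a₂, seg 0 j b₂)]
  have hq : Injective q := by
    have := seg_zero_ne_seg_zero hij ha₁.ne a₂
    intro k l
    fin_cases k <;> fin_cases l <;> simp [q, *, Ne.symm]
  have hsec : Prod.mk ω ⁻¹' crossEvent i j x₁ x₁' x₂ x₂' =
      {ζ | ∀ k, ζ (q k) ∈ (![{x₁} ∩ {x₁'}, {x₂} ∩ {x₂'}] : Fin 2 → Set Bool) k} := by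
    ext ζ
    simp [crossEvent, Fin.forall_fin_succ, q, (h₁ ζ).1, (h₁ ζ).2, (h₂ ζ).1, (h₂ ζ).2, and_assoc]
  rw [hsec, infinitePi_setOf_forall_apply_mem _ hq fun _ => .of_discrete, Fin.prod_univ_two]
  rfl

variable {p : I}

theorem alignMeasure_crossEvent (hp : 0 < (p : ℝ)) (hp1 : (p : ℝ) < 1)
    (hlam : 0 < (lam : ℝ)) (hlam1 : (lam : ℝ) < 1) (hij : i ≠ j) (x₁ x₁' x₂ x₂' : Bool) :
    alignMeasure d p lam (crossEvent i j x₁ x₁' x₂ x₂') =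
      Ber(true, false, p) {true} * (Ber(true, false, lam) {x₁} * Ber(true, false, lam) {x₁'} *
          Ber(true, false, lam) {x₂} * Ber(true, false, lam) {x₂'}) +
        Ber(true, false, p) {false} *
          (Ber(true, false, lam) ({x₁} ∩ {x₁'}) * Ber(true, false, lam) ({x₂} ∩ {x₂'})) := by
  set g : Bool → ℝ≥0∞ := fun t => cond t
    (Ber(true, false, lam) {x₁} * Ber(true, false, lam) {x₁'} *
      Ber(true, false, lam) {x₂} * Ber(true, false, lam) {x₂'})
    (Ber(true, false, lam) ({x₁} ∩ {x₁'}) * Ber(true, false, lam) ({x₂} ∩ {x₂'}))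
  have hsec : ∀ᵐ ω ∂(Measure.infinitePi fun _ : Site d => Ber(true, false, p)),
      Measure.infinitePi (fun _ : Site d × Site d => Ber(true, false, lam))
        (Prod.mk ω ⁻¹' crossEvent i j x₁ x₁' x₂ x₂') = g (ω 0) := by
    filter_upwards [ae_halfAxesOccupied hp] with ω hω
    cases h0 : ω 0
    · exact measure_crossEvent_section_of_vacant hij h0 (hω i) (hω j) x₁ x₁' x₂ x₂'
    · exact measure_crossEvent_section_of_occupied hij h0 (hω i) (hω j) x₁ x₁' x₂ x₂'
  rw [alignMeasure, iidBool_eq_infinitePi _ hp hp1, iidBool_eq_infinitePi _ hlam hlam1,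
    Measure.prod_apply (measurableSet_crossEvent i j x₁ x₁' x₂ x₂'), lintegral_congr_ae hsec,
    ← lintegral_map .of_discrete (measurable_pi_apply 0), Measure.infinitePi_map_eval,
    lintegral_fintype, Fintype.sum_bool]
  simp only [g, cond_true, cond_false]
  ring

theorem alignMeasure_real_crossEvent (hp : 0 < (p : ℝ)) (hp1 : (p : ℝ) < 1)
    (hlam : 0 < (lam : ℝ)) (hlam1 : (lam : ℝ) < 1) (hij : i ≠ j) (x₁ x₁' x₂ x₂' : Bool) :
    (alignMeasure d p lam).real (crossEvent i j x₁ x₁' x₂ x₂') =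
      Ber(true, false, p).real {true} *
          (Ber(true, false, lam).real {x₁} * Ber(true, false, lam).real {x₁'} *
            Ber(true, false, lam).real {x₂} * Ber(true, false, lam).real {x₂'}) +
        Ber(true, false, p).real {false} *
          (Ber(true, false, lam).real ({x₁} ∩ {x₁'}) *
            Ber(true, false, lam).real ({x₂} ∩ {x₂'})) := by
  rw [measureReal_def, alignMeasure_crossEvent hp hp1 hlam hlam1 hij,
    ENNReal.toReal_add (by finiteness) (by finiteness)]
  simp only [ENNReal.toReal_mul, measureReal_def]

end CrossEvent

/-- The marginal law of the four edges joining the origin to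
`±e₁, ±e₂` fails the lattice condition: with `x` the local configuration where exactly
`f₁, f₋₁` are open and `y` the one where exactly `f₁, f₂` are open,
`μ(x∨y)·μ(x∧y) − μ(x)·μ(y) = pλ³(1−λ)·pλ(1−λ)³ − (pλ²(1−λ)² + (1−p)λ(1−λ))·pλ²(1−λ)² < 0`. -/
theorem lattice_condition_fails (d : ℕ) (hd : 2 ≤ d) (p lam : ℝ)
    (hp : p ∈ Set.Ioo (0 : ℝ) 1) (hlam : lam ∈ Set.Ioo (0 : ℝ) 1)
    (muloc : Bool → Bool → Bool → Bool → ℝ)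
    (hmu : muloc = fun b1 bm1 b2 bm2 =>
      (alignMeasure d p lam {ξ |
        edgeState ξ ((0 : Site d), (⟨0, by omega⟩ : Fin d)) = b1 ∧
        edgeState ξ (seg (0 : Site d) ⟨0, by omega⟩ (-1), (⟨0, by omega⟩ : Fin d)) = bm1 ∧
        edgeState ξ ((0 : Site d), (⟨1, by omega⟩ : Fin d)) = b2 ∧
        edgeState ξ (seg (0 : Site d) ⟨1, by omega⟩ (-1), (⟨1, by omega⟩ : Fin d)) = bm2}).toReal) :
    muloc true true true false * muloc true false false false -
        muloc true true false false * muloc true false true false =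
      (p * lam ^ 3 * (1 - lam)) * (p * lam * (1 - lam) ^ 3) -
        (p * lam ^ 2 * (1 - lam) ^ 2 + (1 - p) * lam * (1 - lam)) *
          (p * lam ^ 2 * (1 - lam) ^ 2) ∧
    (p * lam ^ 3 * (1 - lam)) * (p * lam * (1 - lam) ^ 3) -
        (p * lam ^ 2 * (1 - lam) ^ 2 + (1 - p) * lam * (1 - lam)) *
          (p * lam ^ 2 * (1 - lam) ^ 2) < 0 := by
  obtain ⟨hp0, hp1⟩ := hp
  obtain ⟨hlam0, hlam1⟩ := hlam
  refine ⟨?_, ?_⟩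
  · set P : I := ⟨p, hp0.le, hp1.le⟩
    set L : I := ⟨lam, hlam0.le, hlam1.le⟩
    have hij : (⟨0, by omega⟩ : Fin d) ≠ ⟨1, by omega⟩ := by simp
    have hmu' (x₁ x₁' x₂ x₂' : Bool) : muloc x₁ x₁' x₂ x₂' =
        (alignMeasure d P L).real (crossEvent ⟨0, by omega⟩ ⟨1, by omega⟩ x₁ x₁' x₂ x₂') := by
      rw [hmu]
      rfl
    simp only [hmu', alignMeasure_real_crossEvent (p := P) (lam := L) hp0 hp1 hlam0 hlam1 hij,
      MeasurableSpace.measurableSet_top, mem_singleton_iff, Bool.false_eq_true, not_false_eq_true,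
      bernoulliMeasure_real_apply_of_mem_of_notMem, Bool.true_eq_false,
      bernoulliMeasure_real_apply_of_notMem_of_mem, inter_self, inter_singleton_of_notMem,
      measureReal_empty, mul_zero, add_zero, zero_mul, P, L]
    ring
  · have hpos : 0 < p * (1 - p) * lam ^ 3 * (1 - lam) ^ 3 := by
      have := sub_pos.mpr hp1
      have := sub_pos.mpr hlam1
      positivity
    linarith [show (p * lam ^ 3 * (1 - lam)) * (p * lam * (1 - lam) ^ 3) -
        (p * lam ^ 2 * (1 - lam) ^ 2 + (1 - p) * lam * (1 - lam)) * (p * lam ^ 2 * (1 - lam) ^ 2) =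
        -(p * (1 - p) * lam ^ 3 * (1 - lam) ^ 3) by ring]

end AlignmentPercolation
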